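/- Let X̂ be a nonempty finite type and m ≥ 1. Let A₀ be a probability mass function on X̂ with A₀(x) ≥ 1/m for all x ∈ X̂, let D* be a probability mass function on X̂, and let α₀ ≥ 0. For t = 1,…,T let φ_t : X̂ → [0,1] be queries, a_t ∈ [0,1], and b_t ∈ [0,1] real numbers with |q_{φ_t}(D*) − b_t| ≤ α₀ for every t, and define recursively A_t(x) = A_{t-1}(x)·exp(φ_t(x)·(a_t − q_{φ_t}(A_{t-1}))/2) / Σ_y A_{t-1}(y)·exp(φ_t(y)·(a_t − q_{φ_t}(A_{t-1}))/2). Then, writing e_t = |b_t − q_{φ_t}(A_{t-1})|, we have (2/T)·log m ≥ (1/2)·((1/T)·Σ_{t=1}^T e_t)² − (α₀/T)·Σ_{t=1}^T e_t + (1/T)·Σ_{t=1}^T (q_{φ_t}(D*) − b_t)·(a_t − b_t) − (1/(2T))·Σ_{t=1}^T (a_t − b_t)². -/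
import Mathlib


/-- The answer of the query `φ` on the distribution `A`: `q_φ(A) = Σ_x φ(x)·A(x)`. -/
noncomputable def qA {X : Type*} [Fintype X] (φ : X → ℝ) (A : X → ℝ) : ℝ :=
  ∑ x, φ x * A x

noncomputable def KLf {X : Type*} [Fintype X] (D A : X → ℝ) : ℝ :=
  ∑ x, D x * Real.log (D x / A x)

lemma exp_le_quad {x : ℝ} (h : |x| ≤ 1) : Real.exp x ≤ 1 + x + x ^ 2 := by
  have h2 := Real.exp_bound h (n := 2) (by norm_num)
  rw [Finset.sum_range_succ, Finset.sum_range_succ, Finset.sum_range_zero] at h2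
  simp only [pow_zero, pow_one] at h2
  norm_num at h2
  have h3 := abs_le.mp h2
  have h4 : |x| ^ 2 = x ^ 2 := sq_abs x
  nlinarith [h3.2]

lemma KLf_nonneg {X : Type*} [Fintype X] (D A : X → ℝ)
    (hD0 : ∀ x, 0 ≤ D x) (hD1 : ∑ x, D x = 1)
    (hA0 : ∀ x, 0 < A x) (hA1 : ∑ x, A x = 1) : 0 ≤ KLf D A := by
  have key : ∀ x : X, D x - A x ≤ D x * Real.log (D x / A x) := by
    intro x
    rcases eq_or_lt_of_le (hD0 x) with h | h
    · simp [← h]; linarith [(hA0 x).le]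
    · have hpos : 0 < A x / D x := div_pos (hA0 x) h
      have := Real.log_le_sub_one_of_pos hpos
      have hlog : Real.log (D x / A x) = - Real.log (A x / D x) := by
        rw [← Real.log_inv]; congr 1; field_simp
      rw [hlog]
      have h2 : A x / D x - 1 = (A x - D x) / D x := by field_simp
      rw [h2] at this
      have := mul_le_mul_of_nonneg_left this (hD0 x)
      rw [mul_div_cancel₀ _ (ne_of_gt h)] at this
      nlinarith
  have hsum : ∑ x, (D x - A x) ≤ ∑ x, D x * Real.log (D x / A x) :=
    Finset.sum_le_sum (fun x _ => key x)
  rw [Finset.sum_sub_distrib, hD1, hA1] at hsum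
  unfold KLf
  linarith

lemma mw_step {X : Type*} [Fintype X] [Nonempty X]
    (D Ap An : X → ℝ) (φ : X → ℝ) (a : ℝ)
    (hD0 : ∀ x, 0 ≤ D x) (hD1 : ∑ x, D x = 1)
    (hAp0 : ∀ x, 0 < Ap x) (hAp1 : ∑ x, Ap x = 1)
    (hφ : ∀ x, φ x ∈ Set.Icc (0 : ℝ) 1) (ha : a ∈ Set.Icc (0 : ℝ) 1)
    (hrec : ∀ x, An x = Ap x * Real.exp (φ x * (a - qA φ Ap) / 2) /
        ∑ y, Ap y * Real.exp (φ y * (a - qA φ Ap) / 2)) :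
    (∀ x, 0 < An x) ∧ (∑ x, An x = 1) ∧
      ((a - qA φ Ap) / 2) * (qA φ D - qA φ Ap) - ((a - qA φ Ap) / 2) ^ 2 ≤
        KLf D Ap - KLf D An := by
  set q := qA φ Ap with hq
  set lam := (a - q) / 2 with hlam
  set Z := ∑ y, Ap y * Real.exp (φ y * (a - q) / 2) with hZ
  have hq0 : 0 ≤ q := Finset.sum_nonneg fun x _ => mul_nonneg (hφ x).1 (hAp0 x).le
  have hq1 : q ≤ 1 := by
    have : ∑ x, φ x * Ap x ≤ ∑ x, Ap x :=
      Finset.sum_le_sum fun x _ => by nlinarith [(hφ x).2, (hAp0 x).le]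
    rw [hAp1] at this; exact this
  have hlamabs : |lam| ≤ 1 / 2 := by
    rw [hlam, abs_div]
    have : |a - q| ≤ 1 := by rw [abs_le]; constructor <;> nlinarith [ha.1, ha.2]
    rw [abs_of_pos (by norm_num : (0:ℝ) < 2)]; linarith
  have hZpos : 0 < Z := by
    rw [hZ]
    exact Finset.sum_pos (fun x _ => mul_pos (hAp0 x) (Real.exp_pos _)) Finset.univ_nonempty
  have hAn0 : ∀ x, 0 < An x := by
    intro x; rw [hrec x]
    exact div_pos (mul_pos (hAp0 x) (Real.exp_pos _)) hZpos
  have hAn1 : ∑ x, An x = 1 := by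
    rw [Finset.sum_congr rfl fun x _ => hrec x, ← Finset.sum_div]
    exact div_self (ne_of_gt hZpos)
  refine ⟨hAn0, hAn1, ?_⟩
  -- bound on Z
  have hZle : Z ≤ 1 + lam * q + lam ^ 2 := by
    have hpt : ∀ x : X, Ap x * Real.exp (φ x * (a - q) / 2) ≤
        Ap x + lam * (φ x * Ap x) + lam ^ 2 * Ap x := by
      intro x
      have habs : |φ x * lam| ≤ 1 := by
        rw [abs_mul]
        have h1 : |φ x| ≤ 1 := abs_le.mpr ⟨by linarith [(hφ x).1], (hφ x).2⟩
        nlinarith [abs_nonneg (φ x), abs_nonneg lam]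
      have hexp := exp_le_quad habs
      have harg : φ x * (a - q) / 2 = φ x * lam := by rw [hlam]; ring
      rw [harg]
      have h2 : Ap x * Real.exp (φ x * lam) ≤ Ap x * (1 + φ x * lam + (φ x * lam) ^ 2) :=
        mul_le_mul_of_nonneg_left hexp (hAp0 x).le
      have hφ2 : φ x ^ 2 ≤ 1 := by nlinarith [(hφ x).1, (hφ x).2]
      have h3 : (φ x * lam) ^ 2 ≤ lam ^ 2 := by
        calc (φ x * lam) ^ 2 = φ x ^ 2 * lam ^ 2 := by ring
          _ ≤ 1 * lam ^ 2 := mul_le_mul_of_nonneg_right hφ2 (sq_nonneg lam)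
          _ = lam ^ 2 := one_mul _
      nlinarith [(hAp0 x).le]
    rw [hZ]
    calc ∑ y, Ap y * Real.exp (φ y * (a - q) / 2)
        ≤ ∑ x, (Ap x + lam * (φ x * Ap x) + lam ^ 2 * Ap x) :=
          Finset.sum_le_sum fun x _ => hpt x
      _ = (∑ x, Ap x) + lam * (∑ x, φ x * Ap x) + lam ^ 2 * (∑ x, Ap x) := by
          rw [Finset.sum_add_distrib, Finset.sum_add_distrib, Finset.mul_sum, Finset.mul_sum]
      _ = 1 + lam * q + lam ^ 2 := by
          rw [hAp1, show (∑ x, φ x * Ap x) = q from rfl]; ring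
  have hlogZ : Real.log Z ≤ lam * q + lam ^ 2 := by
    have := Real.log_le_sub_one_of_pos hZpos
    linarith
  -- log of An
  have hAnlog : ∀ x, Real.log (An x) = Real.log (Ap x) + φ x * lam - Real.log Z := by
    intro x
    rw [hrec x]
    rw [Real.log_div (ne_of_gt (mul_pos (hAp0 x) (Real.exp_pos _))) (ne_of_gt hZpos),
      Real.log_mul (ne_of_gt (hAp0 x)) (Real.exp_ne_zero _), Real.log_exp]
    rw [hlam]; ring
  have hterm : ∀ x : X, D x * Real.log (D x / Ap x) - D x * Real.log (D x / An x) =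
      D x * (φ x * lam) - D x * Real.log Z := by
    intro x
    rcases eq_or_lt_of_le (hD0 x) with h | h
    · simp [← h]
    · rw [Real.log_div (ne_of_gt h) (ne_of_gt (hAp0 x)),
        Real.log_div (ne_of_gt h) (ne_of_gt (hAn0 x)), hAnlog x]
      ring
  have hdiff : KLf D Ap - KLf D An = lam * qA φ D - Real.log Z := by
    unfold KLf
    rw [← Finset.sum_sub_distrib]
    rw [Finset.sum_congr rfl fun x _ => hterm x]
    rw [Finset.sum_sub_distrib, ← Finset.sum_mul, hD1]
    unfold qA
    rw [Finset.mul_sum]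
    congr 1
    · exact Finset.sum_congr rfl fun x _ => by ring
    · rw [one_mul]
  rw [hdiff]
  have hqD0 : 0 ≤ qA φ D := Finset.sum_nonneg fun x _ => mul_nonneg (hφ x).1 (hD0 x)
  nlinarith [hlogZ]

lemma KLf_le_log {X : Type*} [Fintype X] (D A : X → ℝ) (m : ℝ) (hm : 1 ≤ m)
    (hD0 : ∀ x, 0 ≤ D x) (hD1 : ∑ x, D x = 1)
    (hAlow : ∀ x, 1 / m ≤ A x) : KLf D A ≤ Real.log m := by
  have hm0 : 0 < m := lt_of_lt_of_le one_pos hm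
  have hA0 : ∀ x, 0 < A x := fun x => lt_of_lt_of_le (by positivity) (hAlow x)
  have hlogm : 0 ≤ Real.log m := Real.log_nonneg hm
  have hD1' : ∀ x, D x ≤ 1 := by
    intro x
    calc D x ≤ ∑ y, D y := Finset.single_le_sum (fun y _ => hD0 y) (Finset.mem_univ x)
      _ = 1 := hD1
  have key : ∀ x : X, D x * Real.log (D x / A x) ≤ D x * Real.log m := by
    intro x
    rcases eq_or_lt_of_le (hD0 x) with h | h
    · simp [← h]
    · apply mul_le_mul_of_nonneg_left _ (hD0 x)
      apply Real.log_le_log (div_pos h (hA0 x))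
      rw [div_le_iff₀ (hA0 x)]
      calc D x ≤ 1 := hD1' x
        _ = m * (1 / m) := by field_simp
        _ ≤ m * A x := mul_le_mul_of_nonneg_left (hAlow x) hm0.le
  calc KLf D A ≤ ∑ x, D x * Real.log m := Finset.sum_le_sum fun x _ => key x
    _ = Real.log m := by rw [← Finset.sum_mul, hD1, one_mul]

/-- Telescoped multiplicative-weights potential inequality: running `T` multiplicative-weights
updates from an initial distribution with all masses at least `1/m`, against a comparison
distribution `D*` whose answers are within `α₀` of the reference values `b_t`, yields the
stated bound, where `e_t = |b_t − q_{φ_t}(A_{t−1})|`. -/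
theorem mw_telescoped_potential {X : Type*} [Fintype X] [Nonempty X]
    (m : ℝ) (hm : 1 ≤ m) (T : ℕ)
    (A : ℕ → X → ℝ) (Dstar : X → ℝ) (α₀ : ℝ) (hα₀ : 0 ≤ α₀)
    (φ : ℕ → X → ℝ) (a b : ℕ → ℝ)
    (hA0low : ∀ x, 1 / m ≤ A 0 x) (hA0sum : ∑ x, A 0 x = 1)
    (hD0 : ∀ x, 0 ≤ Dstar x) (hD1 : ∑ x, Dstar x = 1)
    (hφ : ∀ t ∈ Finset.Icc 1 T, ∀ x, φ t x ∈ Set.Icc (0 : ℝ) 1)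
    (ha : ∀ t ∈ Finset.Icc 1 T, a t ∈ Set.Icc (0 : ℝ) 1)
    (hb : ∀ t ∈ Finset.Icc 1 T, b t ∈ Set.Icc (0 : ℝ) 1)
    (hclose : ∀ t ∈ Finset.Icc 1 T, |qA (φ t) Dstar - b t| ≤ α₀)
    (hrec : ∀ t ∈ Finset.Icc 1 T, ∀ x, A t x =
      A (t - 1) x * Real.exp (φ t x * (a t - qA (φ t) (A (t - 1))) / 2) /
        ∑ y, A (t - 1) y * Real.exp (φ t y * (a t - qA (φ t) (A (t - 1))) / 2)) :
    (1 / 2) * ((1 / (T : ℝ)) * ∑ t ∈ Finset.Icc 1 T, |b t - qA (φ t) (A (t - 1))|) ^ 2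
        - (α₀ / (T : ℝ)) * ∑ t ∈ Finset.Icc 1 T, |b t - qA (φ t) (A (t - 1))|
        + (1 / (T : ℝ)) * ∑ t ∈ Finset.Icc 1 T, (qA (φ t) Dstar - b t) * (a t - b t)
        - (1 / (2 * (T : ℝ))) * ∑ t ∈ Finset.Icc 1 T, (a t - b t) ^ 2
      ≤ (2 / (T : ℝ)) * Real.log m := by
  
  rcases Nat.eq_zero_or_pos T with hT | hT
  · subst hT; simp
  have hTpos : (0:ℝ) < T := Nat.cast_pos.mpr hT
  have hT0 : (T:ℝ) ≠ 0 := ne_of_gt hTpos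
  have hm0 : 0 < m := lt_of_lt_of_le one_pos hm
  have inv : ∀ t, t ≤ T → (∀ x, 0 < A t x) ∧ (∑ x, A t x = 1) := by
    intro t
    induction t with
    | zero => exact fun _ => ⟨fun x => lt_of_lt_of_le (by positivity) (hA0low x), hA0sum⟩
    | succ n ih =>
      intro hn
      obtain ⟨h1, h2⟩ := ih (Nat.le_of_succ_le hn)
      have hmem : n + 1 ∈ Finset.Icc 1 T := Finset.mem_Icc.mpr ⟨Nat.succ_le_succ (Nat.zero_le n), hn⟩
      have hrec' := hrec (n + 1) hmem
      simp only [Nat.add_sub_cancel] at hrec'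
      obtain ⟨c1, c2, _⟩ := mw_step Dstar (A n) (A (n + 1)) (φ (n + 1)) (a (n + 1))
        hD0 hD1 h1 h2 (hφ _ hmem) (ha _ hmem) hrec'
      exact ⟨c1, c2⟩
  have step : ∀ t ∈ Finset.Icc 1 T,
      ((a t - qA (φ t) (A (t - 1))) / 2) * (qA (φ t) Dstar - qA (φ t) (A (t - 1)))
        - ((a t - qA (φ t) (A (t - 1))) / 2) ^ 2 ≤ KLf Dstar (A (t - 1)) - KLf Dstar (A t) := by
    intro t ht
    obtain ⟨ht1, ht2⟩ := Finset.mem_Icc.mp ht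
    obtain ⟨h1, h2⟩ := inv (t - 1) (le_trans (Nat.sub_le t 1) ht2)
    exact (mw_step Dstar (A (t - 1)) (A t) (φ t) (a t) hD0 hD1 h1 h2
      (hφ t ht) (ha t ht) (hrec t ht)).2.2
  have tel : ∑ t ∈ Finset.Icc 1 T, (KLf Dstar (A (t - 1)) - KLf Dstar (A t))
      = KLf Dstar (A 0) - KLf Dstar (A T) := by
    rw [show Finset.Icc 1 T = Finset.Ico 1 (T + 1) by rw [Finset.Ico_add_one_right_eq_Icc],
      Finset.sum_Ico_eq_sum_range]
    have hc : ∀ i ∈ Finset.range (T + 1 - 1),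
        KLf Dstar (A (1 + i - 1)) - KLf Dstar (A (1 + i))
          = KLf Dstar (A i) - KLf Dstar (A (i + 1)) := by
      intro i _
      have e1 : 1 + i - 1 = i := by omega
      have e2 : 1 + i = i + 1 := by omega
      rw [e1, e2]
    rw [Finset.sum_congr rfl hc]
    have e3 : T + 1 - 1 = T := by omega
    rw [e3]
    exact Finset.sum_range_sub' (fun i => KLf Dstar (A i)) T
  have hKL0 : KLf Dstar (A 0) ≤ Real.log m := KLf_le_log Dstar (A 0) m hm hD0 hD1 hA0low
  have hKLT : 0 ≤ KLf Dstar (A T) :=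
    KLf_nonneg Dstar (A T) hD0 hD1 (inv T le_rfl).1 (inv T le_rfl).2
  have hsum : ∑ t ∈ Finset.Icc 1 T,
      (((a t - qA (φ t) (A (t - 1))) / 2) * (qA (φ t) Dstar - qA (φ t) (A (t - 1)))
        - ((a t - qA (φ t) (A (t - 1))) / 2) ^ 2) ≤ Real.log m := by
    calc ∑ t ∈ Finset.Icc 1 T,
        (((a t - qA (φ t) (A (t - 1))) / 2) * (qA (φ t) Dstar - qA (φ t) (A (t - 1)))
          - ((a t - qA (φ t) (A (t - 1))) / 2) ^ 2)
        ≤ ∑ t ∈ Finset.Icc 1 T, (KLf Dstar (A (t - 1)) - KLf Dstar (A t)) :=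
          Finset.sum_le_sum step
      _ = KLf Dstar (A 0) - KLf Dstar (A T) := tel
      _ ≤ Real.log m := by linarith
  set E := ∑ t ∈ Finset.Icc 1 T, |b t - qA (φ t) (A (t - 1))| with hE
  set U2 := ∑ t ∈ Finset.Icc 1 T, (b t - qA (φ t) (A (t - 1))) ^ 2 with hU2
  set DU := ∑ t ∈ Finset.Icc 1 T, (qA (φ t) Dstar - b t) * (b t - qA (φ t) (A (t - 1))) with hDU
  set CD := ∑ t ∈ Finset.Icc 1 T, (qA (φ t) Dstar - b t) * (a t - b t) with hCD
  set C2 := ∑ t ∈ Finset.Icc 1 T, (a t - b t) ^ 2 with hC2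
  have hsum' : (1/4) * U2 + (1/2) * DU + (1/2) * CD - (1/4) * C2 ≤ Real.log m := by
    have hid : ∀ t ∈ Finset.Icc 1 T,
        ((a t - qA (φ t) (A (t - 1))) / 2) * (qA (φ t) Dstar - qA (φ t) (A (t - 1)))
          - ((a t - qA (φ t) (A (t - 1))) / 2) ^ 2
        = (1/4) * (b t - qA (φ t) (A (t - 1))) ^ 2
          + (1/2) * ((qA (φ t) Dstar - b t) * (b t - qA (φ t) (A (t - 1))))
          + (1/2) * ((qA (φ t) Dstar - b t) * (a t - b t))
          - (1/4) * (a t - b t) ^ 2 := fun t _ => by ring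
    rw [Finset.sum_congr rfl hid] at hsum
    rw [Finset.sum_sub_distrib, Finset.sum_add_distrib, Finset.sum_add_distrib,
      ← Finset.mul_sum, ← Finset.mul_sum, ← Finset.mul_sum, ← Finset.mul_sum] at hsum
    exact hsum
  have hDUb : -(α₀ * E) ≤ DU := by
    rw [hDU, hE, Finset.mul_sum, ← Finset.sum_neg_distrib]
    apply Finset.sum_le_sum
    intro t ht
    have h1 := hclose t ht
    have h3 : |(qA (φ t) Dstar - b t) * (b t - qA (φ t) (A (t - 1)))|
        ≤ α₀ * |b t - qA (φ t) (A (t - 1))| := by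
      rw [abs_mul]
      exact mul_le_mul_of_nonneg_right h1 (abs_nonneg _)
    linarith [neg_abs_le ((qA (φ t) Dstar - b t) * (b t - qA (φ t) (A (t - 1))))]
  have hE2 : E ^ 2 ≤ (T : ℝ) * U2 := by
    have h := sq_sum_le_card_mul_sum_sq (s := Finset.Icc 1 T)
      (f := fun t => |b t - qA (φ t) (A (t - 1))|)
    have hcard : ((Finset.Icc 1 T).card : ℝ) = (T : ℝ) := by
      rw [Nat.card_Icc]; norm_num
    have hsq : ∑ t ∈ Finset.Icc 1 T, |b t - qA (φ t) (A (t - 1))| ^ 2 = U2 := by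
      rw [hU2]; exact Finset.sum_congr rfl fun t _ => sq_abs _
    rw [hcard, hsq] at h
    exact h
  have key : (1/(2*(T:ℝ))) * U2 + (1/(T:ℝ)) * DU + (1/(T:ℝ)) * CD - (1/(2*(T:ℝ))) * C2
      ≤ (2/(T:ℝ)) * Real.log m := by
    have h := mul_le_mul_of_nonneg_left hsum' (le_of_lt (div_pos two_pos hTpos))
    calc (1/(2*(T:ℝ))) * U2 + (1/(T:ℝ)) * DU + (1/(T:ℝ)) * CD - (1/(2*(T:ℝ))) * C2
        = (2/(T:ℝ)) * ((1/4) * U2 + (1/2) * DU + (1/2) * CD - (1/4) * C2) := by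
          first | (field_simp; ring) | field_simp
      _ ≤ (2/(T:ℝ)) * Real.log m := h
  have g1 : (1/2) * ((1/(T:ℝ)) * E) ^ 2 ≤ (1/(2*(T:ℝ))) * U2 := by
    have h := mul_le_mul_of_nonneg_right hE2 (le_of_lt (by positivity : (0:ℝ) < 1/(2*(T:ℝ)^2)))
    calc (1/2) * ((1/(T:ℝ)) * E) ^ 2 = E ^ 2 * (1/(2*(T:ℝ)^2)) := by
          first | (field_simp; ring) | field_simp
      _ ≤ ((T:ℝ) * U2) * (1/(2*(T:ℝ)^2)) := h
      _ = (1/(2*(T:ℝ))) * U2 := by first | (field_simp; ring) | field_simp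
  have g2 : -((α₀/(T:ℝ)) * E) ≤ (1/(T:ℝ)) * DU := by
    have h := mul_le_mul_of_nonneg_left hDUb (le_of_lt (by positivity : (0:ℝ) < 1/(T:ℝ)))
    calc -((α₀/(T:ℝ)) * E) = (1/(T:ℝ)) * (-(α₀ * E)) := by ring
      _ ≤ (1/(T:ℝ)) * DU := h
  linarith
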